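/- arXiv:2410.22728 — 4 statements merged into one kernel-verified Lean document; each statement's English description precedes it below -/
import Mathlib

section
/- In a finite discounted MDP, for any two policies π and π* and any step n ≥ 0, E_{(s,a)∼ρ_π^n}[q_{π*}(s,a) − q_π(s,a)] = γ E_{s∼d_π^{n+1}}[Σ_a q_{π*}(s,a)(π*(a|s) − π(a|s))] + γ E_{(s,a)∼ρ_π^{n+1}}[q_{π*}(s,a) − q_π(s,a)], where d_π^t(s) = Pr(s_t = s; π) and ρ_π^t(s,a) = π(a|s) d_π^t(s). -/
/-!
Subtracting the two Bellman equations, the reward cancels and `q_{π*}(s,a) − q_π(s,a)` becomes `γ`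
times the one-step expectation of `F(s') = Σ_a (π*(a|s') q_{π*}(s',a) − π(a|s') q_π(s',a))`.
Averaging a one-step expectation against `ρ_π^n` is averaging against `d_π^{n+1}`, and splitting
`F = Σ_a q_{π*}(π* − π) + Σ_a π (q_{π*} − q_π)` gives the two terms on the right.
-/

/-- The time-`t` state distribution under policy `π`, starting from `d0`. -/
noncomputable def stateDist {S A : Type*} [Fintype S] [Fintype A]
    (T : S → A → S → ℝ) (π : S → A → ℝ) (d0 : S → ℝ) : ℕ → S → ℝ
  | 0 => d0
  | n + 1 => fun s' => ∑ s, ∑ a, stateDist T π d0 n s * π s a * T s a s'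

/-- The discounted stationary state distribution `d_π(s) = (1-γ) ∑_t γ^t d_π^t(s)`. -/
noncomputable def discStateDist {S A : Type*} [Fintype S] [Fintype A]
    (T : S → A → S → ℝ) (π : S → A → ℝ) (d0 : S → ℝ) (γ : ℝ) : S → ℝ :=
  fun s => (1 - γ) * ∑' t : ℕ, γ ^ t * stateDist T π d0 t s

open Finset

section

variable {S A : Type*} [Fintype S] [Fintype A]

theorem bellman_sub_eq (T : S → A → S → ℝ) (r : S → A → ℝ) (γ : ℝ) (π πs : S → A → ℝ)
    (q qs : S → A → ℝ)
    (hq : ∀ s a, q s a = r s a + γ * ∑ s', T s a s' * ∑ a', π s' a' * q s' a')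
    (hqs : ∀ s a, qs s a = r s a + γ * ∑ s', T s a s' * ∑ a', πs s' a' * qs s' a')
    (s : S) (a : A) :
    qs s a - q s a = γ * ∑ s', T s a s' * ∑ a', (πs s' a' * qs s' a' - π s' a' * q s' a') := by
  simp only [sum_sub_distrib, mul_sub]
  rw [hq, hqs]
  ring

theorem sum_stateDist_succ_mul (T : S → A → S → ℝ) (π : S → A → ℝ) (d0 : S → ℝ) (n : ℕ)
    (f : S → ℝ) :
    ∑ s', stateDist T π d0 (n + 1) s' * f s'
      = ∑ s, ∑ a, π s a * stateDist T π d0 n s * ∑ s', T s a s' * f s' := by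
  simp only [stateDist, sum_mul, mul_sum]
  rw [sum_comm]
  refine sum_congr rfl fun s _ => ?_
  rw [sum_comm]
  exact sum_congr rfl fun a _ => sum_congr rfl fun s' _ => by ring

end

theorem tail_term_one_step_recursion_general
    {S A : Type*} [Fintype S] [Fintype A]
    (T : S → A → S → ℝ) (r : S → A → ℝ) (γ : ℝ) (d0 : S → ℝ)
    (π πs : S → A → ℝ) (q qs : S → A → ℝ)
    (hq : ∀ s a, q s a = r s a + γ * ∑ s', T s a s' * ∑ a', π s' a' * q s' a')
    (hqs : ∀ s a, qs s a = r s a + γ * ∑ s', T s a s' * ∑ a', πs s' a' * qs s' a')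
    (n : ℕ) :
    (∑ s, ∑ a, (π s a * stateDist T π d0 n s) * (qs s a - q s a))
      = γ * (∑ s, stateDist T π d0 (n + 1) s * ∑ a, qs s a * (πs s a - π s a))
        + γ * ∑ s, ∑ a, (π s a * stateDist T π d0 (n + 1) s) * (qs s a - q s a) := by
  set F : S → ℝ := fun s' => ∑ a', (πs s' a' * qs s' a' - π s' a' * q s' a')
  have hgap : ∀ s a, qs s a - q s a = γ * ∑ s', T s a s' * F s' :=
    bellman_sub_eq T r γ π πs q qs hq hqs
  have hsplit : ∀ s, stateDist T π d0 (n + 1) s * ∑ a, qs s a * (πs s a - π s a)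
      + ∑ a, (π s a * stateDist T π d0 (n + 1) s) * (qs s a - q s a)
      = stateDist T π d0 (n + 1) s * F s := fun s => by
    simp only [F, mul_sum, ← sum_add_distrib]
    exact sum_congr rfl fun a _ => by ring
  calc (∑ s, ∑ a, (π s a * stateDist T π d0 n s) * (qs s a - q s a))
      = γ * ∑ s, ∑ a, π s a * stateDist T π d0 n s * ∑ s', T s a s' * F s' := by
        simp only [hgap, mul_sum]
        exact sum_congr rfl fun s _ => sum_congr rfl fun a _ => sum_congr rfl fun s' _ => by ring
    _ = γ * ∑ s, stateDist T π d0 (n + 1) s * F s := by rw [sum_stateDist_succ_mul]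
    _ = _ := by rw [← mul_add, ← sum_add_distrib, sum_congr rfl fun s _ => hsplit s]

/-- one-step recursion for the weighted tail term. -/
theorem tail_term_one_step_recursion
    {S A : Type*} [Fintype S] [Fintype A]
    (T : S → A → S → ℝ) (r : S → A → ℝ) (γ : ℝ) (d0 : S → ℝ) (Rmax : ℝ)
    (π πs : S → A → ℝ) (q qs : S → A → ℝ)
    (hγ : 0 < γ ∧ γ < 1)
    (hT : ∀ s a, (∀ s', 0 ≤ T s a s') ∧ ∑ s', T s a s' = 1)
    (hd0 : (∀ s, 0 ≤ d0 s) ∧ ∑ s, d0 s = 1)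
    (hπ : ∀ s, (∀ a, 0 ≤ π s a) ∧ ∑ a, π s a = 1)
    (hπs : ∀ s, (∀ a, 0 ≤ πs s a) ∧ ∑ a, πs s a = 1)
    (hr : ∀ s a, 0 ≤ r s a ∧ r s a ≤ Rmax)
    (hq : ∀ s a, q s a = r s a + γ * ∑ s', T s a s' * ∑ a', π s' a' * q s' a')
    (hqs : ∀ s a, qs s a = r s a + γ * ∑ s', T s a s' * ∑ a', πs s' a' * qs s' a')
    (n : ℕ) :
    (∑ s, ∑ a, (π s a * stateDist T π d0 n s) * (qs s a - q s a))
      = γ * (∑ s, stateDist T π d0 (n + 1) s * ∑ a, qs s a * (πs s a - π s a))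
        + γ * ∑ s, ∑ a, (π s a * stateDist T π d0 (n + 1) s) * (qs s a - q s a) :=
  tail_term_one_step_recursion_general T r γ d0 π πs q qs hq hqs n
end

section
/- Let π and π* be two policies in a finite discounted MDP with rewards in [0, R_max]. If the action-value weighted decision difference satisfies E_{s∼d_π}[Σ_a q_{π*}(s,a)|π*(a|s) − π(a|s)|] ≤ ε, then |J(π*) − J(π)| ≤ ε/(1−γ). -/
open scoped BigOperators

/-- action-value weighted distillation guarantee (Corollary 1). -/
theorem av_weighted_performance_guarantee
    {S A : Type*} [Fintype S] [Fintype A]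
    (T : S → A → S → ℝ) (r : S → A → ℝ) (γ : ℝ) (d0 : S → ℝ) (Rmax : ℝ)
    (π πs : S → A → ℝ) (q qs : S → A → ℝ) (ε : ℝ)
    (hγ : 0 < γ ∧ γ < 1)
    (hT : ∀ s a, (∀ s', 0 ≤ T s a s') ∧ ∑ s', T s a s' = 1)
    (hd0 : (∀ s, 0 ≤ d0 s) ∧ ∑ s, d0 s = 1)
    (hπ : ∀ s, (∀ a, 0 ≤ π s a) ∧ ∑ a, π s a = 1)
    (hπs : ∀ s, (∀ a, 0 ≤ πs s a) ∧ ∑ a, πs s a = 1)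
    (hr : ∀ s a, 0 ≤ r s a ∧ r s a ≤ Rmax)
    (hq : ∀ s a, q s a = r s a + γ * ∑ s', T s a s' * ∑ a', π s' a' * q s' a')
    (hqs : ∀ s a, qs s a = r s a + γ * ∑ s', T s a s' * ∑ a', πs s' a' * qs s' a')
    (hqs_nonneg : ∀ s a, 0 ≤ qs s a)
    (hε : ∑ s, discStateDist T π d0 γ s * ∑ a, qs s a * |πs s a - π s a| ≤ ε) :
    |(∑ s, ∑ a, d0 s * πs s a * qs s a) - (∑ s, ∑ a, d0 s * π s a * q s a)|
      ≤ ε / (1 - γ) := by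
  obtain ⟨hγ0, hγ1⟩ := hγ
  have hSne : Nonempty S := by
    by_contra hcon
    rw [not_nonempty_iff] at hcon
    have := hd0.2
    rw [Finset.univ_eq_empty, Finset.sum_empty] at this
    norm_num at this
  have hAne : Nonempty A := by
    by_contra hcon
    rw [not_nonempty_iff] at hcon
    obtain ⟨s⟩ := hSne
    have := (hπ s).2
    rw [Finset.univ_eq_empty, Finset.sum_empty] at this
    norm_num at this
  set d : ℕ → S → ℝ := stateDist T π d0 with hd
  have hd_succ : ∀ t s', d (t + 1) s' = ∑ s, ∑ a, d t s * π s a * T s a s' :=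
    fun t s' => rfl
  have hd_zero : ∀ s, d 0 s = d0 s := fun s => rfl
  have hd_nonneg : ∀ t s, 0 ≤ d t s := by
    intro t
    induction t with
    | zero => exact hd0.1
    | succ n ih =>
      intro s'
      rw [hd_succ]
      refine Finset.sum_nonneg fun s _ => Finset.sum_nonneg fun a _ => ?_
      exact mul_nonneg (mul_nonneg (ih s) ((hπ s).1 a)) ((hT s a).1 s')
  have hd_sum : ∀ t, ∑ s, d t s = 1 := by
    intro t
    induction t with
    | zero => exact hd0.2
    | succ n ih =>
      have h1 : ∑ s', d (n + 1) s' = ∑ s, ∑ a, d n s * π s a * ∑ s', T s a s' := by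
        simp only [hd_succ, Finset.mul_sum]
        rw [Finset.sum_comm]
        refine Finset.sum_congr rfl fun s _ => ?_
        rw [Finset.sum_comm]
      rw [h1]
      have h2 : ∀ s, ∑ a, d n s * π s a * ∑ s', T s a s' = d n s := by
        intro s
        have : ∀ a ∈ Finset.univ, d n s * π s a * ∑ s', T s a s' = d n s * π s a := by
          intro a _
          rw [(hT s a).2, mul_one]
        rw [Finset.sum_congr rfl this, ← Finset.mul_sum, (hπ s).2, mul_one]
      rw [Finset.sum_congr rfl fun s _ => h2 s, ih]
  have hd_le_one : ∀ t s, d t s ≤ 1 := by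
    intro t s
    rw [← hd_sum t]
    exact Finset.single_le_sum (fun s' _ => hd_nonneg t s') (Finset.mem_univ s)
  set V : S → ℝ := fun s => ∑ a, π s a * q s a with hV
  set Vs : S → ℝ := fun s => ∑ a, πs s a * qs s a with hVs
  set g : S → ℝ := fun s => Vs s - V s with hg
  set f : S → ℝ := fun s => ∑ a, qs s a * (πs s a - π s a) with hf
  set hb : S → ℝ := fun s => ∑ a, qs s a * |πs s a - π s a| with hhb
  -- pointwise recursion
  have hrec : ∀ s, g s = f s + γ * ∑ a, π s a * ∑ s', T s a s' * g s' := by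
    intro s
    have h2 : ∀ a, qs s a - q s a = γ * ∑ s', T s a s' * g s' := by
      intro a
      rw [hqs s a, hq s a]
      have hsub : ∑ s', T s a s' * g s'
          = (∑ s', T s a s' * Vs s') - ∑ s', T s a s' * V s' := by
        rw [← Finset.sum_sub_distrib]
        refine Finset.sum_congr rfl fun s' _ => ?_
        simp only [hg]
        ring
      rw [hsub]
      simp only [hVs, hV]
      ring
    have h1 : Vs s - ∑ a, π s a * qs s a = f s := by
      simp only [hVs, hf]
      rw [← Finset.sum_sub_distrib]
      exact Finset.sum_congr rfl fun a _ => by ring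
    have h3 : ∑ a, π s a * (qs s a - q s a) = (∑ a, π s a * qs s a) - V s := by
      simp only [hV]
      rw [← Finset.sum_sub_distrib]
      exact Finset.sum_congr rfl fun a _ => by ring
    have h4 : ∑ a, π s a * (qs s a - q s a)
        = γ * ∑ a, π s a * ∑ s', T s a s' * g s' := by
      rw [Finset.mul_sum]
      refine Finset.sum_congr rfl fun a _ => ?_
      rw [h2 a]
      ring
    have : g s = (Vs s - ∑ a, π s a * qs s a) + ∑ a, π s a * (qs s a - q s a) := by
      rw [h3]
      simp only [hg]
      ring
    rw [this, h1, h4]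
  -- one-step shift identity
  have hstep : ∀ t, ∑ s, d t s * g s
      = (∑ s, d t s * f s) + γ * ∑ s', d (t + 1) s' * g s' := by
    intro t
    have hswap : ∑ s', d (t + 1) s' * g s'
        = ∑ s, d t s * ∑ a, π s a * ∑ s', T s a s' * g s' := by
      simp only [hd_succ, Finset.sum_mul, Finset.mul_sum]
      rw [Finset.sum_comm]
      refine Finset.sum_congr rfl fun s _ => ?_
      rw [Finset.sum_comm]
      refine Finset.sum_congr rfl fun a _ => Finset.sum_congr rfl fun s' _ => by ring
    calc ∑ s, d t s * g s
        = ∑ s, (d t s * f s + γ * (d t s * ∑ a, π s a * ∑ s', T s a s' * g s')) := by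
          refine Finset.sum_congr rfl fun s _ => ?_
          rw [hrec s]
          ring
      _ = (∑ s, d t s * f s) + γ * ∑ s, d t s * ∑ a, π s a * ∑ s', T s a s' * g s' := by
          rw [Finset.sum_add_distrib, ← Finset.mul_sum]
      _ = (∑ s, d t s * f s) + γ * ∑ s', d (t + 1) s' * g s' := by rw [hswap]
  -- partial sums
  have hpartial : ∀ n, ∑ s, d0 s * g s
      = (∑ t ∈ Finset.range n, γ ^ t * ∑ s, d t s * f s) + γ ^ n * ∑ s, d n s * g s := by
    intro n
    induction n with
    | zero => simp [hd_zero]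
    | succ n ih =>
      rw [Finset.sum_range_succ, ih, hstep n]
      ring
  -- bounds
  haveI := hSne
  obtain ⟨C, hC⟩ : ∃ C, ∀ s, |g s| ≤ C :=
    ⟨Finset.univ.sup' Finset.univ_nonempty (fun s => |g s|),
      fun s => Finset.le_sup' (fun s => |g s|) (Finset.mem_univ s)⟩
  obtain ⟨F, hF⟩ : ∃ F, ∀ s, hb s ≤ F :=
    ⟨Finset.univ.sup' Finset.univ_nonempty hb,
      fun s => Finset.le_sup' (hb) (Finset.mem_univ s)⟩
  have hb_nonneg : ∀ s, 0 ≤ hb s := by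
    intro s
    exact Finset.sum_nonneg fun a _ => mul_nonneg (hqs_nonneg s a) (abs_nonneg _)
  have hfh : ∀ s, |f s| ≤ hb s := by
    intro s
    simp only [hf, hhb]
    calc |∑ a, qs s a * (πs s a - π s a)| ≤ ∑ a, |qs s a * (πs s a - π s a)| :=
          Finset.abs_sum_le_sum_abs _ _
      _ = ∑ a, qs s a * |πs s a - π s a| := by
          refine Finset.sum_congr rfl fun a _ => ?_
          rw [abs_mul, abs_of_nonneg (hqs_nonneg s a)]
  have hdot_f_le : ∀ t, |∑ s, d t s * f s| ≤ ∑ s, d t s * hb s := by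
    intro t
    calc |∑ s, d t s * f s| ≤ ∑ s, |d t s * f s| := Finset.abs_sum_le_sum_abs _ _
      _ = ∑ s, d t s * |f s| := by
          refine Finset.sum_congr rfl fun s _ => ?_
          rw [abs_mul, abs_of_nonneg (hd_nonneg t s)]
      _ ≤ ∑ s, d t s * hb s := by
          refine Finset.sum_le_sum fun s _ => ?_
          exact mul_le_mul_of_nonneg_left (hfh s) (hd_nonneg t s)
  have hdot_hb_le : ∀ t, ∑ s, d t s * hb s ≤ F := by
    intro t
    calc ∑ s, d t s * hb s ≤ ∑ s, d t s * F := by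
          refine Finset.sum_le_sum fun s _ => ?_
          exact mul_le_mul_of_nonneg_left (hF s) (hd_nonneg t s)
      _ = F := by rw [← Finset.sum_mul, hd_sum t, one_mul]
  have hdot_g_le : ∀ t, |∑ s, d t s * g s| ≤ C := by
    intro t
    calc |∑ s, d t s * g s| ≤ ∑ s, |d t s * g s| := Finset.abs_sum_le_sum_abs _ _
      _ = ∑ s, d t s * |g s| := by
          refine Finset.sum_congr rfl fun s _ => ?_
          rw [abs_mul, abs_of_nonneg (hd_nonneg t s)]
      _ ≤ ∑ s, d t s * C := by
          refine Finset.sum_le_sum fun s _ => ?_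
          exact mul_le_mul_of_nonneg_left (hC s) (hd_nonneg t s)
      _ = C := by rw [← Finset.sum_mul, hd_sum t, one_mul]
  have hgeo : Summable (fun t : ℕ => γ ^ t) := summable_geometric_of_lt_one hγ0.le hγ1
  have hsummY : Summable (fun t => γ ^ t * ∑ s, d t s * hb s) := by
    refine Summable.of_norm_bounded (hgeo.mul_right F) fun t => ?_
    rw [Real.norm_eq_abs, abs_mul, abs_of_nonneg (pow_nonneg hγ0.le t)]
    refine mul_le_mul_of_nonneg_left ?_ (pow_nonneg hγ0.le t)
    rw [abs_of_nonneg (Finset.sum_nonneg fun s _ =>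
      mul_nonneg (hd_nonneg t s) (hb_nonneg s))]
    exact hdot_hb_le t
  have hsummX : Summable (fun t => γ ^ t * ∑ s, d t s * f s) := by
    refine Summable.of_norm_bounded (hgeo.mul_right F) fun t => ?_
    rw [Real.norm_eq_abs, abs_mul, abs_of_nonneg (pow_nonneg hγ0.le t)]
    refine mul_le_mul_of_nonneg_left ?_ (pow_nonneg hγ0.le t)
    exact (hdot_f_le t).trans (hdot_hb_le t)
  have hsummXabs : Summable (fun t => ‖γ ^ t * ∑ s, d t s * f s‖) := by
    refine Summable.of_nonneg_of_le (fun t => norm_nonneg _) (fun t => ?_)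
      (hgeo.mul_right F)
    rw [Real.norm_eq_abs, abs_mul, abs_of_nonneg (pow_nonneg hγ0.le t)]
    refine mul_le_mul_of_nonneg_left ?_ (pow_nonneg hγ0.le t)
    exact (hdot_f_le t).trans (hdot_hb_le t)
  -- the tail vanishes
  have htail : Filter.Tendsto (fun n => γ ^ n * ∑ s, d n s * g s) Filter.atTop (nhds 0) := by
    refine squeeze_zero_norm (a := fun n => γ ^ n * C) (fun n => ?_) ?_
    · rw [Real.norm_eq_abs, abs_mul, abs_of_nonneg (pow_nonneg hγ0.le n)]
      exact mul_le_mul_of_nonneg_left (hdot_g_le n) (pow_nonneg hγ0.le n)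
    · have := (tendsto_pow_atTop_nhds_zero_of_lt_one hγ0.le hγ1).mul_const C
      simpa using this
  have hlim : HasSum (fun t => γ ^ t * ∑ s, d t s * f s) (∑ s, d0 s * g s) := by
    rw [hsummX.hasSum_iff_tendsto_nat]
    have heq : ∀ n, ∑ t ∈ Finset.range n, γ ^ t * ∑ s, d t s * f s
        = (∑ s, d0 s * g s) - γ ^ n * ∑ s, d n s * g s := by
      intro n
      have := hpartial n
      linarith
    refine Filter.Tendsto.congr (fun n => (heq n).symm) ?_
    have := Filter.Tendsto.sub (tendsto_const_nhds
      (x := ∑ s, d0 s * g s) (f := Filter.atTop)) htail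
    simpa using this
  -- main bound through the tsum
  have hmain : |∑ s, d0 s * g s| ≤ ∑' t, γ ^ t * ∑ s, d t s * hb s := by
    rw [← hlim.tsum_eq]
    calc |∑' t, γ ^ t * ∑ s, d t s * f s| ≤ ∑' t, ‖γ ^ t * ∑ s, d t s * f s‖ := by
          exact norm_tsum_le_tsum_norm hsummXabs
      _ ≤ ∑' t, γ ^ t * ∑ s, d t s * hb s := by
          refine Summable.tsum_le_tsum (fun t => ?_) hsummXabs hsummY
          rw [Real.norm_eq_abs, abs_mul, abs_of_nonneg (pow_nonneg hγ0.le t)]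
          exact mul_le_mul_of_nonneg_left (hdot_f_le t) (pow_nonneg hγ0.le t)
  -- relate the ε hypothesis to the tsum
  have hdisc : ∑ s, discStateDist T π d0 γ s * hb s
      = (1 - γ) * ∑' t, γ ^ t * ∑ s, d t s * hb s := by
    have hsum_s : ∀ s : S, Summable (fun t => γ ^ t * d t s * hb s) := by
      intro s
      refine Summable.of_norm_bounded
        (hgeo.mul_right |hb s|) fun t => ?_
      rw [Real.norm_eq_abs, abs_mul, abs_mul, abs_of_nonneg (pow_nonneg hγ0.le t)]
      refine mul_le_mul_of_nonneg_right ?_ (abs_nonneg _)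
      refine mul_le_of_le_one_right (pow_nonneg hγ0.le t) ?_
      rw [abs_of_nonneg (hd_nonneg t s)]
      exact hd_le_one t s
    calc ∑ s, discStateDist T π d0 γ s * hb s
        = ∑ s, (1 - γ) * ∑' t, γ ^ t * d t s * hb s := by
          refine Finset.sum_congr rfl fun s _ => ?_
          show (1 - γ) * (∑' t, γ ^ t * d t s) * hb s
            = (1 - γ) * ∑' t, γ ^ t * d t s * hb s
          rw [mul_assoc, ← tsum_mul_right]
      _ = (1 - γ) * ∑ s, ∑' t, γ ^ t * d t s * hb s := by rw [Finset.mul_sum]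
      _ = (1 - γ) * ∑' t, ∑ s, γ ^ t * d t s * hb s := by
          rw [Summable.tsum_finsetSum fun s _ => hsum_s s]
      _ = (1 - γ) * ∑' t, γ ^ t * ∑ s, d t s * hb s := by
          congr 1
          refine tsum_congr fun t => ?_
          rw [Finset.mul_sum]
          exact Finset.sum_congr rfl fun s _ => by ring
  have h1γ : 0 < 1 - γ := by linarith
  have htsum_le : ∑' t, γ ^ t * ∑ s, d t s * hb s ≤ ε / (1 - γ) := by
    rw [le_div_iff₀ h1γ]
    have : (∑' t, γ ^ t * ∑ s, d t s * hb s) * (1 - γ)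
        = ∑ s, discStateDist T π d0 γ s * hb s := by rw [hdisc]; ring
    rw [this]
    exact hε
  -- finish
  have hLHS : (∑ s, ∑ a, d0 s * πs s a * qs s a) - (∑ s, ∑ a, d0 s * π s a * q s a)
      = ∑ s, d0 s * g s := by
    rw [← Finset.sum_sub_distrib]
    refine Finset.sum_congr rfl fun s _ => ?_
    simp only [hg, hVs, hV]
    rw [mul_sub, Finset.mul_sum, Finset.mul_sum]
    congr 1
    · exact Finset.sum_congr rfl fun a _ => by ring
    · exact Finset.sum_congr rfl fun a _ => by ring
  rw [hLHS]
  exact hmain.trans htsum_le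
end

section
/- Let π and π* be two policies in a finite discounted MDP with rewards in [0, R_max]. If E_{s∼d_π}[D_TV(π*(·|s), π(·|s))] ≤ ε, where D_TV is the total variation distance over actions, then |J(π*) − J(π)| ≤ 2R_max ε/(1−γ)². -/
open scoped BigOperators

section aux
variable {S A : Type*} [Fintype S] [Fintype A]

lemma abs_weighted_le {ι : Type*} [Fintype ι] {M : ℝ} (p f : ι → ℝ)
    (hp : ∀ i, 0 ≤ p i) (hps : ∑ i, p i = 1) (hf : ∀ i, |f i| ≤ M) :
    |∑ i, p i * f i| ≤ M := by
  calc |∑ i, p i * f i| ≤ ∑ i, |p i * f i| := Finset.abs_sum_le_sum_abs _ _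
    _ ≤ ∑ i, p i * M := Finset.sum_le_sum fun i _ => by
        rw [abs_mul, abs_of_nonneg (hp i)]
        exact mul_le_mul_of_nonneg_left (hf i) (hp i)
    _ = M := by rw [← Finset.sum_mul, hps, one_mul]

lemma stateDist_nonneg (T : S → A → S → ℝ) (π : S → A → ℝ) (d0 : S → ℝ)
    (hT : ∀ s a s', 0 ≤ T s a s') (hd0 : ∀ s, 0 ≤ d0 s) (hπ : ∀ s a, 0 ≤ π s a) :
    ∀ n s, 0 ≤ stateDist T π d0 n s
  | 0, s => hd0 s
  | n+1, s' => Finset.sum_nonneg fun s _ => Finset.sum_nonneg fun a _ =>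
      mul_nonneg (mul_nonneg (stateDist_nonneg T π d0 hT hd0 hπ n s) (hπ s a)) (hT s a s')

lemma stateDist_sum_one (T : S → A → S → ℝ) (π : S → A → ℝ) (d0 : S → ℝ)
    (hT : ∀ s a, ∑ s', T s a s' = 1) (hd0 : ∑ s, d0 s = 1) (hπ : ∀ s, ∑ a, π s a = 1) :
    ∀ n, ∑ s, stateDist T π d0 n s = 1 := by
  intro n
  induction n with
  | zero => exact hd0
  | succ n ih =>
    show ∑ s', ∑ s, ∑ a, stateDist T π d0 n s * π s a * T s a s' = 1
    rw [Finset.sum_comm]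
    calc ∑ s, ∑ s', ∑ a, stateDist T π d0 n s * π s a * T s a s'
        = ∑ s, stateDist T π d0 n s := by
          refine Finset.sum_congr rfl fun s _ => ?_
          rw [Finset.sum_comm]
          simp only [← Finset.mul_sum, hT, mul_one, hπ]
      _ = 1 := ih

lemma q_abs_bound [Nonempty S] [Nonempty A]
    (T : S → A → S → ℝ) (r : S → A → ℝ) (γ : ℝ) (Rmax : ℝ)
    (π : S → A → ℝ) (q : S → A → ℝ)
    (hγ : 0 < γ ∧ γ < 1)
    (hT : ∀ s a, (∀ s', 0 ≤ T s a s') ∧ ∑ s', T s a s' = 1)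
    (hπ : ∀ s, (∀ a, 0 ≤ π s a) ∧ ∑ a, π s a = 1)
    (hr : ∀ s a, 0 ≤ r s a ∧ r s a ≤ Rmax)
    (hq : ∀ s a, q s a = r s a + γ * ∑ s', T s a s' * ∑ a', π s' a' * q s' a') :
    ∀ s a, |q s a| ≤ Rmax / (1 - γ) := by
  have h1γ : 0 < 1 - γ := by linarith [hγ.2]
  obtain ⟨⟨s0, a0⟩, -, hmax⟩ := Finset.exists_max_image Finset.univ
    (fun p : S × A => |q p.1 p.2|) ⟨(Classical.arbitrary S, Classical.arbitrary A), Finset.mem_univ _⟩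
  have hM : ∀ s a, |q s a| ≤ |q s0 a0| := fun s a => hmax (s, a) (Finset.mem_univ _)
  set M : ℝ := |q s0 a0| with hMdef
  have inner_bd : ∀ s', |∑ a', π s' a' * q s' a'| ≤ M := fun s' =>
    abs_weighted_le _ _ (hπ s').1 (hπ s').2 (fun a' => hM s' a')
  have outer_bd : |∑ s', T s0 a0 s' * ∑ a', π s' a' * q s' a'| ≤ M :=
    abs_weighted_le _ _ (hT s0 a0).1 (hT s0 a0).2 inner_bd
  have key : M ≤ Rmax + γ * M := by
    calc M = |q s0 a0| := rfl
      _ = |r s0 a0 + γ * ∑ s', T s0 a0 s' * ∑ a', π s' a' * q s' a'| := by rw [← hq]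
      _ ≤ |r s0 a0| + |γ * ∑ s', T s0 a0 s' * ∑ a', π s' a' * q s' a'| := abs_add_le _ _
      _ ≤ Rmax + γ * M := by
          gcongr
          · rw [abs_of_nonneg (hr s0 a0).1]; exact (hr s0 a0).2
          · rw [abs_mul, abs_of_pos hγ.1]
            exact mul_le_mul_of_nonneg_left outer_bd hγ.1.le
  intro s a
  refine (hM s a).trans ?_
  rw [le_div_iff₀ h1γ]
  nlinarith [key]

end aux

lemma abs_tsum_le_tsum_abs_real (f : ℕ → ℝ) (hf : Summable fun t => |f t|) :
    |∑' t, f t| ≤ ∑' t, |f t| := by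
  simpa [Real.norm_eq_abs] using
    norm_tsum_le_tsum_norm (f := f) (by simpa [Real.norm_eq_abs] using hf)

set_option maxHeartbeats 1000000 in
/-- TV-based distillation guarantee with quadratic discount complexity. -/
theorem tv_performance_guarantee
    {S A : Type*} [Fintype S] [Fintype A]
    (T : S → A → S → ℝ) (r : S → A → ℝ) (γ : ℝ) (d0 : S → ℝ) (Rmax : ℝ)
    (π πs : S → A → ℝ) (q qs : S → A → ℝ) (ε : ℝ)
    (hγ : 0 < γ ∧ γ < 1)
    (hT : ∀ s a, (∀ s', 0 ≤ T s a s') ∧ ∑ s', T s a s' = 1)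
    (hd0 : (∀ s, 0 ≤ d0 s) ∧ ∑ s, d0 s = 1)
    (hπ : ∀ s, (∀ a, 0 ≤ π s a) ∧ ∑ a, π s a = 1)
    (hπs : ∀ s, (∀ a, 0 ≤ πs s a) ∧ ∑ a, πs s a = 1)
    (hr : ∀ s a, 0 ≤ r s a ∧ r s a ≤ Rmax)
    (hq : ∀ s a, q s a = r s a + γ * ∑ s', T s a s' * ∑ a', π s' a' * q s' a')
    (hqs : ∀ s a, qs s a = r s a + γ * ∑ s', T s a s' * ∑ a', πs s' a' * qs s' a')
    (hqs_bdd : ∀ s a, 0 ≤ qs s a ∧ qs s a ≤ Rmax / (1 - γ))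
    (hε : ∑ s, discStateDist T π d0 γ s * ((1 / 2) * ∑ a, |πs s a - π s a|) ≤ ε) :
    |(∑ s, ∑ a, d0 s * πs s a * qs s a) - (∑ s, ∑ a, d0 s * π s a * q s a)|
      ≤ 2 * Rmax * ε / (1 - γ) ^ 2 := by
  obtain ⟨hγ0, hγ1⟩ := hγ
  have h1γ : 0 < 1 - γ := by linarith
  haveI hS : Nonempty S := by
    by_contra h
    rw [not_nonempty_iff] at h
    have := hd0.2
    simp [Finset.univ_eq_empty] at this
  haveI hA : Nonempty A := by
    by_contra h
    rw [not_nonempty_iff] at h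
    have := (hπ (Classical.arbitrary S)).2
    simp [Finset.univ_eq_empty] at this
  have hRmax : 0 ≤ Rmax :=
    le_trans (hr (Classical.arbitrary S) (Classical.arbitrary A)).1
      (hr (Classical.arbitrary S) (Classical.arbitrary A)).2
  obtain ⟨Mq, hMq⟩ : ∃ Mq : ℝ, Mq = Rmax / (1 - γ) := ⟨_, rfl⟩
  have hMq0 : 0 ≤ Mq := hMq ▸ div_nonneg hRmax h1γ.le
  have hqb : ∀ s a, |q s a| ≤ Mq := by
    rw [hMq]; exact q_abs_bound T r γ Rmax π q ⟨hγ0, hγ1⟩ hT hπ hr hq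
  have hqsb : ∀ s a, |qs s a| ≤ Mq := fun s a => abs_le.2
    ⟨le_trans (neg_nonpos.2 hMq0) (hqs_bdd s a).1, hMq ▸ (hqs_bdd s a).2⟩
  -- abbreviations (opaque)
  obtain ⟨V, hV⟩ : ∃ V : S → ℝ, V = fun s => ∑ a, π s a * q s a := ⟨_, rfl⟩
  obtain ⟨Vs, hVs⟩ : ∃ Vs : S → ℝ, Vs = fun s => ∑ a, πs s a * qs s a := ⟨_, rfl⟩
  obtain ⟨Δ, hΔ⟩ : ∃ Δ : S → ℝ, Δ = fun s => Vs s - V s := ⟨_, rfl⟩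
  obtain ⟨g, hg⟩ : ∃ g : S → ℝ, g = fun s => ∑ a, (πs s a - π s a) * qs s a := ⟨_, rfl⟩
  obtain ⟨d, hd⟩ : ∃ d : ℕ → S → ℝ, d = stateDist T π d0 := ⟨_, rfl⟩
  obtain ⟨D, hD⟩ : ∃ D : ℕ → ℝ, D = fun n => ∑ s, d n s * Δ s := ⟨_, rfl⟩
  obtain ⟨G, hG⟩ : ∃ G : ℕ → ℝ, G = fun n => ∑ s, d n s * g s := ⟨_, rfl⟩
  have hdnn : ∀ n s, 0 ≤ d n s := by
    rw [hd]
    exact stateDist_nonneg T π d0 (fun s a => (hT s a).1) hd0.1 (fun s => (hπ s).1)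
  have hdsum : ∀ n, ∑ s, d n s = 1 := by
    rw [hd]
    exact stateDist_sum_one T π d0 (fun s a => (hT s a).2) hd0.2 (fun s => (hπ s).2)
  have hdle1 : ∀ n s, d n s ≤ 1 := fun n s => by
    rw [← hdsum n]
    exact Finset.single_le_sum (fun s _ => hdnn n s) (Finset.mem_univ s)
  have hd0' : ∀ s, d 0 s = d0 s := fun s => by rw [hd]; rfl
  have hdsucc : ∀ n s', d (n + 1) s' = ∑ s, ∑ a, d n s * π s a * T s a s' := by
    intro n s'
    conv_lhs => rw [hd]
    show ∑ s, ∑ a, stateDist T π d0 n s * π s a * T s a s' = _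
    rw [hd]
  -- pointwise bounds
  have hVb : ∀ s, |V s| ≤ Mq := fun s => by
    rw [hV]
    exact abs_weighted_le _ _ (hπ s).1 (hπ s).2 (fun a => hqb s a)
  have hVsb : ∀ s, |Vs s| ≤ Mq := fun s => by
    rw [hVs]
    exact abs_weighted_le _ _ (hπs s).1 (hπs s).2 (fun a => hqsb s a)
  have hΔb : ∀ s, |Δ s| ≤ 2 * Mq := fun s => by
    rw [hΔ]
    calc |Vs s - V s| ≤ |Vs s| + |V s| := abs_sub _ _
      _ ≤ 2 * Mq := by linarith [hVb s, hVsb s]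
  have htv0 : ∀ s, 0 ≤ (1 / 2) * ∑ a, |πs s a - π s a| := fun s =>
    mul_nonneg (by norm_num) (Finset.sum_nonneg fun a _ => abs_nonneg _)
  have hgb : ∀ s, |g s| ≤ 2 * Mq * ((1 / 2) * ∑ a, |πs s a - π s a|) := by
    intro s
    rw [hg]
    calc |∑ a, (πs s a - π s a) * qs s a| ≤ ∑ a, |(πs s a - π s a) * qs s a| :=
          Finset.abs_sum_le_sum_abs _ _
      _ ≤ ∑ a, |πs s a - π s a| * Mq := Finset.sum_le_sum fun a _ => by
          rw [abs_mul]
          exact mul_le_mul_of_nonneg_left (hqsb s a) (abs_nonneg _)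
      _ = 2 * Mq * ((1 / 2) * ∑ a, |πs s a - π s a|) := by
          rw [← Finset.sum_mul]; ring
  have htvle1 : ∀ s, (1 / 2) * ∑ a, |πs s a - π s a| ≤ 1 := by
    intro s
    have : ∑ a, |πs s a - π s a| ≤ 2 := by
      calc ∑ a, |πs s a - π s a| ≤ ∑ a, (πs s a + π s a) := Finset.sum_le_sum fun a _ => by
            calc |πs s a - π s a| ≤ |πs s a| + |π s a| := abs_sub _ _
              _ = πs s a + π s a := by
                  rw [abs_of_nonneg ((hπs s).1 a), abs_of_nonneg ((hπ s).1 a)]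
        _ = 2 := by rw [Finset.sum_add_distrib, (hπs s).2, (hπ s).2]; norm_num
    linarith
  have hgb' : ∀ s, |g s| ≤ 2 * Mq := fun s =>
    (hgb s).trans (by nlinarith [htvle1 s, htv0 s, hMq0])
  -- recursion
  have hdiffq : ∀ s a, qs s a - q s a = γ * ∑ s', T s a s' * Δ s' := by
    intro s a
    rw [hqs s a, hq s a]
    have e : ∑ s', T s a s' * Δ s' =
        (∑ s', T s a s' * ∑ a', πs s' a' * qs s' a')
          - (∑ s', T s a s' * ∑ a', π s' a' * q s' a') := by
      rw [← Finset.sum_sub_distrib]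
      refine Finset.sum_congr rfl fun s' _ => ?_
      rw [hΔ, hVs, hV]
      exact mul_sub _ _ _
    rw [e]; ring
  have hrec : ∀ s, Δ s = g s + γ * ∑ a, π s a * ∑ s', T s a s' * Δ s' := by
    intro s
    have e1 : Δ s = ∑ a, ((πs s a - π s a) * qs s a + π s a * (qs s a - q s a)) := by
      rw [hΔ, hVs, hV]
      show (∑ a, πs s a * qs s a) - (∑ a, π s a * q s a) = _
      rw [← Finset.sum_sub_distrib]
      exact Finset.sum_congr rfl fun a _ => by ring
    rw [e1, Finset.sum_add_distrib, hg]
    congr 1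
    rw [Finset.mul_sum]
    exact Finset.sum_congr rfl fun a _ => by rw [hdiffq s a]; ring
  have hDrec : ∀ n, D n = G n + γ * D (n + 1) := by
    intro n
    have e2 : D (n + 1) = ∑ s, ∑ a, ∑ s', d n s * π s a * T s a s' * Δ s' := by
      rw [hD]
      show ∑ s', d (n+1) s' * Δ s' = _
      simp only [hdsucc, Finset.sum_mul]
      rw [Finset.sum_comm]
      exact Finset.sum_congr rfl fun s _ => by rw [Finset.sum_comm]
    calc D n = ∑ s, d n s * (g s + γ * ∑ a, π s a * ∑ s', T s a s' * Δ s') := by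
          rw [hD]
          exact Finset.sum_congr rfl fun s _ => by rw [← hrec s]
      _ = G n + γ * ∑ s, ∑ a, ∑ s', d n s * π s a * T s a s' * Δ s' := by
          simp only [mul_add, Finset.sum_add_distrib, hG]
          congr 1
          simp only [Finset.mul_sum]
          exact Finset.sum_congr rfl fun s _ => Finset.sum_congr rfl fun a _ =>
            Finset.sum_congr rfl fun s' _ => by ring
      _ = G n + γ * D (n + 1) := by rw [e2]
  -- unrolling
  have unroll : ∀ n, D 0 = (∑ t ∈ Finset.range n, γ ^ t * G t) + γ ^ n * D n := by
    intro n
    induction n with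
    | zero => simp
    | succ n ih =>
      rw [ih, Finset.sum_range_succ, hDrec n]
      ring
  -- bounds on D and G
  have hDb : ∀ n, |D n| ≤ 2 * Mq := fun n => by
    rw [hD]
    exact abs_weighted_le _ _ (hdnn n) (hdsum n) hΔb
  have hGb : ∀ n, |G n| ≤ 2 * Mq := fun n => by
    rw [hG]
    exact abs_weighted_le _ _ (hdnn n) (hdsum n) hgb'
  -- summability and limit
  have hgeo : Summable (fun t : ℕ => (2 * Mq) * γ ^ t) :=
    (summable_geometric_of_lt_one hγ0.le hγ1).mul_left _
  have hf : Summable (fun t : ℕ => γ ^ t * G t) := by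
    refine Summable.of_norm_bounded hgeo fun t => ?_
    rw [Real.norm_eq_abs, abs_mul, abs_pow, abs_of_pos hγ0]
    calc γ ^ t * |G t| ≤ γ ^ t * (2 * Mq) :=
          mul_le_mul_of_nonneg_left (hGb t) (pow_nonneg hγ0.le t)
      _ = (2 * Mq) * γ ^ t := by ring
  have hlim0 : Filter.Tendsto (fun n : ℕ => γ ^ n * D n) Filter.atTop (nhds 0) := by
    refine squeeze_zero_norm (a := fun n : ℕ => (2 * Mq) * γ ^ n) (fun n => ?_) ?_
    · rw [Real.norm_eq_abs, abs_mul, abs_pow, abs_of_pos hγ0]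
      exact (mul_le_mul_of_nonneg_left (hDb n) (pow_nonneg hγ0.le n)).trans_eq
        (mul_comm _ _)
    · have := (tendsto_pow_atTop_nhds_zero_of_lt_one hγ0.le hγ1).const_mul (2 * Mq)
      simpa using this
  have htsum : ∑' t : ℕ, γ ^ t * G t = D 0 := by
    have h1 := hf.hasSum.tendsto_sum_nat
    have h2 : Filter.Tendsto (fun n : ℕ => ∑ t ∈ Finset.range n, γ ^ t * G t)
        Filter.atTop (nhds (D 0)) := by
      have e : (fun n : ℕ => ∑ t ∈ Finset.range n, γ ^ t * G t)
          = fun n => D 0 - γ ^ n * D n := by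
        funext n
        rw [unroll n]; ring
      rw [e]
      simpa using tendsto_const_nhds.sub hlim0
    exact tendsto_nhds_unique h1 h2
  -- per-state summability
  have hdgs : ∀ s, Summable (fun t : ℕ => (γ ^ t * d t s) * |g s|) := by
    intro s
    refine Summable.of_nonneg_of_le (fun t => ?_) (fun t => ?_)
      ((summable_geometric_of_lt_one hγ0.le hγ1).mul_right (2 * Mq))
    · exact mul_nonneg (mul_nonneg (pow_nonneg hγ0.le t) (hdnn t s)) (abs_nonneg _)
    · calc (γ ^ t * d t s) * |g s| ≤ (γ ^ t * 1) * (2 * Mq) := by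
            refine mul_le_mul ?_ (hgb' s) (abs_nonneg _) ?_
            · exact mul_le_mul_of_nonneg_left (hdle1 t s) (pow_nonneg hγ0.le t)
            · positivity
        _ = γ ^ t * (2 * Mq) := by ring
  have hH : Summable (fun t : ℕ => γ ^ t * ∑ s, d t s * |g s|) := by
    have e : (fun t : ℕ => γ ^ t * ∑ s, d t s * |g s|)
        = fun t => ∑ s, (γ ^ t * d t s) * |g s| := by
      funext t
      rw [Finset.mul_sum]
      exact Finset.sum_congr rfl fun s _ => by ring
    rw [e]
    exact summable_sum fun s _ => hdgs s
  -- the chain of bounds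
  have hdd_eq : ∀ s, ∑' t : ℕ, γ ^ t * d t s = discStateDist T π d0 γ s / (1 - γ) := by
    intro s
    rw [hd, discStateDist, mul_div_cancel_left₀ _ (ne_of_gt h1γ)]
  have hddnn : ∀ s, 0 ≤ discStateDist T π d0 γ s := by
    intro s
    rw [discStateDist]
    refine mul_nonneg h1γ.le (tsum_nonneg fun t => mul_nonneg (pow_nonneg hγ0.le t) ?_)
    exact hd ▸ hdnn t s
  have step1 : |D 0| ≤ ∑' t : ℕ, γ ^ t * ∑ s, d t s * |g s| := by
    rw [← htsum]
    calc |∑' t : ℕ, γ ^ t * G t| ≤ ∑' t : ℕ, |γ ^ t * G t| :=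
          abs_tsum_le_tsum_abs_real _ hf.abs
      _ ≤ ∑' t : ℕ, γ ^ t * ∑ s, d t s * |g s| := by
          refine Summable.tsum_le_tsum (fun t => ?_) hf.abs hH
          rw [abs_mul, abs_pow, abs_of_pos hγ0]
          refine mul_le_mul_of_nonneg_left ?_ (pow_nonneg hγ0.le t)
          rw [hG]
          exact (Finset.abs_sum_le_sum_abs _ _).trans (le_of_eq (Finset.sum_congr rfl
            fun s _ => by rw [abs_mul, abs_of_nonneg (hdnn t s)]))
  have step2 : ∑' t : ℕ, γ ^ t * ∑ s, d t s * |g s|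
      = ∑ s, (discStateDist T π d0 γ s / (1 - γ)) * |g s| := by
    calc ∑' t : ℕ, γ ^ t * ∑ s, d t s * |g s|
        = ∑' t : ℕ, ∑ s, (γ ^ t * d t s) * |g s| := by
          refine tsum_congr fun t => ?_
          rw [Finset.mul_sum]
          exact Finset.sum_congr rfl fun s _ => by ring
      _ = ∑ s, ∑' t : ℕ, (γ ^ t * d t s) * |g s| := Summable.tsum_finsetSum fun s _ => hdgs s
      _ = ∑ s, (discStateDist T π d0 γ s / (1 - γ)) * |g s| := by
          refine Finset.sum_congr rfl fun s _ => ?_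
          rw [tsum_mul_right, hdd_eq s]
  have step3 : ∑ s, (discStateDist T π d0 γ s / (1 - γ)) * |g s|
      ≤ (2 * Mq / (1 - γ)) * ε := by
    calc ∑ s, (discStateDist T π d0 γ s / (1 - γ)) * |g s|
        ≤ ∑ s, (discStateDist T π d0 γ s / (1 - γ))
            * (2 * Mq * ((1 / 2) * ∑ a, |πs s a - π s a|)) := by
          refine Finset.sum_le_sum fun s _ => ?_
          exact mul_le_mul_of_nonneg_left (hgb s) (div_nonneg (hddnn s) h1γ.le)
      _ = (2 * Mq / (1 - γ))
            * ∑ s, discStateDist T π d0 γ s * ((1 / 2) * ∑ a, |πs s a - π s a|) := by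
          rw [Finset.mul_sum]
          exact Finset.sum_congr rfl fun s _ => by ring
      _ ≤ (2 * Mq / (1 - γ)) * ε := by
          refine mul_le_mul_of_nonneg_left hε ?_
          positivity
  -- identify the goal with D 0
  have hgoal : (∑ s, ∑ a, d0 s * πs s a * qs s a) - (∑ s, ∑ a, d0 s * π s a * q s a)
      = D 0 := by
    rw [hD, ← Finset.sum_sub_distrib]
    refine Finset.sum_congr rfl fun s _ => ?_
    rw [hd0' s, hΔ, hVs, hV]
    show _ = d0 s * ((∑ a, πs s a * qs s a) - ∑ a, π s a * q s a)
    rw [mul_sub, Finset.mul_sum, Finset.mul_sum]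
    congr 1 <;> exact Finset.sum_congr rfl fun a _ => by ring
  rw [hgoal]
  calc |D 0| ≤ (2 * Mq / (1 - γ)) * ε := step1.trans (step2 ▸ step3)
    _ = 2 * Rmax * ε / (1 - γ) ^ 2 := by
        rw [hMq]
        rw [pow_two]
        rw [div_mul_eq_mul_div, mul_comm (2 * (Rmax / (1 - γ))) ε, ← mul_div_assoc,
          ← mul_div_assoc, div_div]
        ring_nf
end

section
/- The bound |J(π*) − J(π)| ≤ ε/(1−γ) of the action-value weighted guarantee is tight: in a finite discounted MDP, if two policies π and π* satisfy that π*(a|s) − π(a|s) < 0 only at state-action pairs where q_{π*}(s,a) = 0, then J(π*) − J(π) = (1/(1−γ)) E_{s∼d_π}[Σ_a q_{π*}(s,a)|π*(a|s) − π(a|s)|], i.e., the performance gap equals exactly (1/(1−γ)) times the weighted decision difference. -/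
open scoped BigOperators

/-- tightness of the action-value weighted bound. -/
theorem av_weighted_bound_tight
    {S A : Type*} [Fintype S] [Fintype A]
    (T : S → A → S → ℝ) (r : S → A → ℝ) (γ : ℝ) (d0 : S → ℝ) (Rmax : ℝ)
    (π πs : S → A → ℝ) (q qs : S → A → ℝ)
    (hγ : 0 < γ ∧ γ < 1)
    (hT : ∀ s a, (∀ s', 0 ≤ T s a s') ∧ ∑ s', T s a s' = 1)
    (hd0 : (∀ s, 0 ≤ d0 s) ∧ ∑ s, d0 s = 1)
    (hπ : ∀ s, (∀ a, 0 ≤ π s a) ∧ ∑ a, π s a = 1)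
    (hπs : ∀ s, (∀ a, 0 ≤ πs s a) ∧ ∑ a, πs s a = 1)
    (hr : ∀ s a, 0 ≤ r s a ∧ r s a ≤ Rmax)
    (hq : ∀ s a, q s a = r s a + γ * ∑ s', T s a s' * ∑ a', π s' a' * q s' a')
    (hqs : ∀ s a, qs s a = r s a + γ * ∑ s', T s a s' * ∑ a', πs s' a' * qs s' a')
    (hqs_nonneg : ∀ s a, 0 ≤ qs s a)
    (hworst : ∀ s a, πs s a - π s a < 0 → qs s a = 0) :
    (∑ s, ∑ a, d0 s * πs s a * qs s a) - (∑ s, ∑ a, d0 s * π s a * q s a)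
      = (1 / (1 - γ)) *
          ∑ s, discStateDist T π d0 γ s * ∑ a, qs s a * |πs s a - π s a| := by
  obtain ⟨hγ0, hγ1⟩ := hγ
  have hγne : (1 : ℝ) - γ ≠ 0 := by linarith
  set d : ℕ → S → ℝ := stateDist T π d0 with hdd
  set Vs : S → ℝ := fun s => ∑ a, πs s a * qs s a with hVs
  set Vp : S → ℝ := fun s => ∑ a, π s a * q s a with hVp
  set D : S → ℝ := fun s => Vs s - Vp s with hDdef
  set g : S → ℝ := fun s => ∑ a, qs s a * |πs s a - π s a| with hg
  set P : (S → ℝ) → S → ℝ := fun f s => ∑ a, π s a * ∑ s', T s a s' * f s' with hP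
  -- d is a prob dist
  have hd_nonneg : ∀ t s, 0 ≤ d t s := by
    intro t
    induction t with
    | zero => exact hd0.1
    | succ n ih =>
      intro s'
      apply Finset.sum_nonneg; intro s _
      apply Finset.sum_nonneg; intro a _
      exact mul_nonneg (mul_nonneg (ih s) ((hπ s).1 a)) ((hT s a).1 s')
  have hd_sum : ∀ t, ∑ s, d t s = 1 := by
    intro t
    induction t with
    | zero => exact hd0.2
    | succ n ih =>
      show ∑ s', ∑ s, ∑ a, d n s * π s a * T s a s' = 1
      rw [Finset.sum_comm]
      calc ∑ s, ∑ s', ∑ a, d n s * π s a * T s a s'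
          = ∑ s, d n s := by
            apply Finset.sum_congr rfl; intro s _
            rw [Finset.sum_comm]
            calc ∑ a, ∑ s', d n s * π s a * T s a s'
                = ∑ a, d n s * π s a := by
                  apply Finset.sum_congr rfl; intro a _
                  rw [← Finset.mul_sum, (hT s a).2, mul_one]
              _ = d n s := by rw [← Finset.mul_sum, (hπ s).2, mul_one]
        _ = 1 := ih
  have hd_le_one : ∀ t s, d t s ≤ 1 := by
    intro t s
    calc d t s ≤ ∑ s', d t s' :=
          Finset.single_le_sum (fun i _ => hd_nonneg t i) (Finset.mem_univ s)
      _ = 1 := hd_sum t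
  -- L1 : g = Vs - π·qs
  have L1 : ∀ s, g s = Vs s - ∑ a, π s a * qs s a := by
    intro s
    have key : ∀ a, qs s a * |πs s a - π s a| = πs s a * qs s a - π s a * qs s a := by
      intro a
      rcases lt_or_ge (πs s a - π s a) 0 with h | h
      · rw [hworst s a h]; ring
      · rw [abs_of_nonneg h]; ring
    show (∑ a, qs s a * |πs s a - π s a|) = _
    rw [Finset.sum_congr rfl (fun a _ => key a), Finset.sum_sub_distrib]
  -- Bellman: π·qs and Vp
  have hPlin : ∀ s, P Vs s - P Vp s = P D s := by
    intro s
    show _ = ∑ a, π s a * ∑ s', T s a s' * (Vs s' - Vp s')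
    rw [← Finset.sum_sub_distrib]
    apply Finset.sum_congr rfl; intro a _
    rw [← mul_sub, ← Finset.sum_sub_distrib]
    congr 1; apply Finset.sum_congr rfl; intro s' _; ring
  have hBs : ∀ s, (∑ a, π s a * qs s a) = (∑ a, π s a * r s a) + γ * P Vs s := by
    intro s
    have : ∀ a, π s a * qs s a
        = π s a * r s a + γ * (π s a * ∑ s', T s a s' * Vs s') := by
      intro a; rw [hqs s a]; ring
    rw [Finset.sum_congr rfl (fun a _ => this a), Finset.sum_add_distrib, ← Finset.mul_sum]
  have hBp : ∀ s, Vp s = (∑ a, π s a * r s a) + γ * P Vp s := by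
    intro s
    have : ∀ a, π s a * q s a
        = π s a * r s a + γ * (π s a * ∑ s', T s a s' * Vp s') := by
      intro a; rw [hq s a]; ring
    show (∑ a, π s a * q s a) = _
    rw [Finset.sum_congr rfl (fun a _ => this a), Finset.sum_add_distrib, ← Finset.mul_sum]
  have hgD : ∀ s, g s = D s - γ * P D s := by
    intro s
    rw [L1 s, hBs s, ← hPlin s]
    have := hBp s
    show Vs s - _ = (Vs s - Vp s) - γ * (P Vs s - P Vp s)
    linarith
  -- step identity
  have Lstep : ∀ (f : S → ℝ) t, (∑ s, d (t+1) s * f s) = ∑ s, d t s * P f s := by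
    intro f t
    show (∑ s', (∑ s, ∑ a, d t s * π s a * T s a s') * f s') = _
    simp only [Finset.sum_mul, Finset.mul_sum]
    rw [Finset.sum_comm]
    apply Finset.sum_congr rfl; intro s _
    rw [Finset.sum_comm]
    show _ = d t s * ∑ a, π s a * ∑ s', T s a s' * f s'
    rw [Finset.mul_sum]
    apply Finset.sum_congr rfl; intro a _
    rw [Finset.mul_sum, Finset.mul_sum]
    apply Finset.sum_congr rfl; intro s' _
    ring
  -- c
  set c : ℕ → ℝ := fun t => γ ^ t * ∑ s, d t s * D s with hc
  set C : ℝ := ∑ s, |D s| with hC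
  have hcbound : ∀ t, ‖c t‖ ≤ γ ^ t * C := by
    intro t
    have h1 : |∑ s, d t s * D s| ≤ C := by
      calc |∑ s, d t s * D s| ≤ ∑ s, |d t s * D s| := Finset.abs_sum_le_sum_abs _ _
        _ ≤ ∑ s, |D s| := by
            apply Finset.sum_le_sum; intro s _
            rw [abs_mul, abs_of_nonneg (hd_nonneg t s)]
            calc d t s * |D s| ≤ 1 * |D s| :=
                  mul_le_mul_of_nonneg_right (hd_le_one t s) (abs_nonneg _)
              _ = |D s| := one_mul _
    calc ‖c t‖ = γ ^ t * |∑ s, d t s * D s| := by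
          rw [Real.norm_eq_abs, hc, abs_mul, abs_of_nonneg (pow_nonneg hγ0.le t)]
      _ ≤ γ ^ t * C := mul_le_mul_of_nonneg_left h1 (pow_nonneg hγ0.le t)
  have hctend : Filter.Tendsto c Filter.atTop (nhds 0) := by
    apply squeeze_zero_norm hcbound
    have := (tendsto_pow_atTop_nhds_zero_of_lt_one hγ0.le hγ1).mul_const C
    simpa using this
  have hcsummable : Summable c := by
    apply Summable.of_norm_bounded ((summable_geometric_of_lt_one hγ0.le hγ1).mul_right C) hcbound
  have hsub : Summable (fun t => c t - c (t+1)) :=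
    hcsummable.sub ((summable_nat_add_iff 1).2 hcsummable)
  have htel : ∑' t, (c t - c (t+1)) = c 0 := by
    have h1 := hsub.hasSum.tendsto_sum_nat
    have h2 : Filter.Tendsto (fun n => ∑ i ∈ Finset.range n, (c i - c (i+1)))
        Filter.atTop (nhds (c 0 - 0)) := by
      have : (fun n => ∑ i ∈ Finset.range n, (c i - c (i+1))) = fun n => c 0 - c n := by
        funext n; exact Finset.sum_range_sub' c n
      rw [this]
      exact tendsto_const_nhds.sub hctend
    rw [sub_zero] at h2
    exact tendsto_nhds_unique h1 h2
  -- per-term identity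
  have hterm : ∀ t, γ ^ t * ∑ s, d t s * g s = c t - c (t+1) := by
    intro t
    have e1 : (∑ s, d t s * g s) = (∑ s, d t s * D s) - γ * ∑ s, d t s * P D s := by
      rw [Finset.mul_sum, ← Finset.sum_sub_distrib]
      apply Finset.sum_congr rfl; intro s _
      rw [hgD s]; ring
    rw [e1, ← Lstep D t, hc]
    ring
  -- summability per state
  have hsumm_state : ∀ s, Summable (fun t => γ ^ t * d t s * g s) := by
    intro s
    apply Summable.of_norm_bounded
      ((summable_geometric_of_lt_one hγ0.le hγ1).mul_right |g s|)
    intro t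
    rw [Real.norm_eq_abs, abs_mul, abs_mul, abs_of_nonneg (pow_nonneg hγ0.le t),
      abs_of_nonneg (hd_nonneg t s)]
    calc γ ^ t * d t s * |g s| ≤ γ ^ t * 1 * |g s| := by
          apply mul_le_mul_of_nonneg_right _ (abs_nonneg _)
          exact mul_le_mul_of_nonneg_left (hd_le_one t s) (pow_nonneg hγ0.le t)
      _ = γ ^ t * |g s| := by ring
  -- LHS
  have hLHS : (∑ s, ∑ a, d0 s * πs s a * qs s a) - (∑ s, ∑ a, d0 s * π s a * q s a)
      = c 0 := by
    have e1 : (∑ s, ∑ a, d0 s * πs s a * qs s a) = ∑ s, d0 s * Vs s := by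
      apply Finset.sum_congr rfl; intro s _
      rw [Finset.mul_sum]
      apply Finset.sum_congr rfl; intro a _; ring
    have e2 : (∑ s, ∑ a, d0 s * π s a * q s a) = ∑ s, d0 s * Vp s := by
      apply Finset.sum_congr rfl; intro s _
      rw [Finset.mul_sum]
      apply Finset.sum_congr rfl; intro a _; ring
    rw [e1, e2, hc]
    simp only [pow_zero, one_mul]
    rw [← Finset.sum_sub_distrib]
    apply Finset.sum_congr rfl; intro s _
    show d0 s * Vs s - d0 s * Vp s = d 0 s * (Vs s - Vp s)
    have : d 0 s = d0 s := rfl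
    rw [this]; ring
  -- RHS
  have hRHS : (1 / (1 - γ)) * ∑ s, discStateDist T π d0 γ s * g s = c 0 := by
    have e1 : ∀ s, discStateDist T π d0 γ s * g s
        = (1 - γ) * ∑' t, γ ^ t * d t s * g s := by
      intro s
      show (1 - γ) * (∑' t : ℕ, γ ^ t * d t s) * g s = _
      rw [mul_assoc, ← tsum_mul_right]
    rw [Finset.sum_congr rfl (fun s _ => e1 s), ← Finset.mul_sum,
      ← mul_assoc, one_div, inv_mul_cancel₀ hγne, one_mul,
      ← Summable.tsum_finsetSum (fun s _ => hsumm_state s)]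
    have e2 : ∀ t : ℕ, (∑ s, γ ^ t * d t s * g s) = c t - c (t+1) := by
      intro t
      rw [← hterm t, Finset.mul_sum]
      apply Finset.sum_congr rfl; intro s _; ring
    rw [tsum_congr e2, htel]
  rw [hLHS, ← hRHS]
end
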